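/- Let A be a normal subgroup of a finite group G such that A has a π-Hall subgroup, G/A has a π-Hall subgroup, and some π-Hall subgroup H of A satisfies H^A = H^G. Then G has a π-Hall subgroup. -/

import Mathlib

def IsPiNumber (π : Set ℕ) (n : ℕ) : Prop := ∀ p : ℕ, p.Prime → p ∣ n → p ∈ π

def IsHallSubgroup {G : Type*} [Group G] (π : Set ℕ) (H : Subgroup G) : Prop :=
  IsPiNumber π (Nat.card H) ∧ ∀ p : ℕ, p.Prime → p ∣ H.index → p ∉ π

def conjSub {G : Type*} [Group G] (g : G) (H : Subgroup G) : Subgroup G :=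
  H.map (MulAut.conj g).toMonoidHom

/-!
Let `K` be a `π`-Hall subgroup of `G ⧸ A` and `φ : G → G ⧸ A` the quotient map. Since every
`G`-conjugate of `H` is an `A`-conjugate, the Frattini argument gives `G = A · N_G(H)`, so
`T = N_G(H) ∩ φ⁻¹(K)` maps onto `K`. In `T ⧸ H` the normal subgroup `(A ∩ T) ⧸ H` has order
dividing `|A : H|`, a `π'`-number, and quotient `≅ K`, a `π`-group; by Schur–Zassenhaus it has a
complement, whose preimage `E` satisfies `E ∩ A = H` and `φ(E) = K`. Hence `|E| = |H| |K|` and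
`|G : E| = |A : H| |G ⧸ A : K|`.
-/
namespace IsPiNumber

variable {π : Set ℕ} {m n : ℕ}

theorem mul (hm : IsPiNumber π m) (hn : IsPiNumber π n) : IsPiNumber π (m * n) :=
  fun p hp hpmn => ((Nat.Prime.dvd_mul hp).mp hpmn).elim (hm p hp) (hn p hp)

theorem of_dvd (hn : IsPiNumber π n) (hmn : m ∣ n) : IsPiNumber π m :=
  fun p hp hpm => hn p hp (hpm.trans hmn)

theorem coprime_compl (hm : IsPiNumber π m) (hn : IsPiNumber πᶜ n) : m.Coprime n :=
  Nat.coprime_of_dvd fun p hp hpm hpn => hn p hp hpn (hm p hp hpm)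

end IsPiNumber

theorem isHallSubgroup_iff {G : Type*} [Group G] {π : Set ℕ} {H : Subgroup G} :
    IsHallSubgroup π H ↔ IsPiNumber π (Nat.card H) ∧ IsPiNumber πᶜ H.index :=
  Iff.rfl

namespace Subgroup

variable {G : Type*} [Group G]

theorem conjSub_conjSub (x y : G) (H : Subgroup G) :
    conjSub x (conjSub y H) = conjSub (x * y) H := by
  rw [conjSub, conjSub, conjSub, map_map, map_mul]
  rfl

theorem conjSub_one (H : Subgroup G) : conjSub 1 H = H := by
  rw [conjSub, map_one]
  exact map_id H

theorem conjSub_eq_self_iff {g : G} {H : Subgroup G} : conjSub g H = H ↔ g ∈ normalizer H :=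
  mem_normalizer_iff_map_conj_eq.symm

theorem sup_normalizer_eq_top_of_forall_conjSub {A H : Subgroup G}
    (h : ∀ g : G, ∃ a ∈ A, conjSub g H = conjSub a H) : A ⊔ normalizer H = ⊤ := by
  refine eq_top_iff.mpr fun g _ => ?_
  obtain ⟨a, ha, hga⟩ := h g
  have hn : a⁻¹ * g ∈ normalizer H := by
    rw [← conjSub_eq_self_iff, ← conjSub_conjSub, hga, conjSub_conjSub, inv_mul_cancel,
      conjSub_one]
  simpa using mul_mem_sup ha hn

theorem card_subgroupOf (H K : Subgroup G) : Nat.card (H.subgroupOf K) = Nat.card ↥(H ⊓ K) := by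
  rw [← inf_subgroupOf_right]
  exact Nat.card_congr (subgroupOfEquivOfLe inf_le_right).toEquiv

theorem map_inf_comap_of_map_eq_top {N : Type*} [Group N] {f : G →* N} {S : Subgroup G}
    (hS : S.map f = ⊤) (K : Subgroup N) : (S ⊓ K.comap f).map f = K := by
  refine le_antisymm ((map_mono inf_le_right).trans (map_comap_le f K)) fun k hk => ?_
  obtain ⟨s, hs, rfl⟩ : k ∈ S.map f := hS ▸ mem_top k
  exact ⟨s, ⟨hs, hk⟩, rfl⟩

theorem exists_inf_eq_sup_eq_top_of_coprime [Finite G] {H D : Subgroup G} [H.Normal] [D.Normal]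
    (hHD : H ≤ D) (hcop : (H.relIndex D).Coprime D.index) :
    ∃ E : Subgroup G, E ⊓ D = H ∧ E ⊔ D = ⊤ := by
  set ρ := QuotientGroup.mk' H
  have hρ : Function.Surjective ρ := QuotientGroup.mk'_surjective H
  have hker : ρ.ker = H := QuotientGroup.ker_mk' H
  have hkerD : ρ.ker ≤ D := hker.le.trans hHD
  have hD : (D.map ρ).comap ρ = D := comap_map_eq_self hkerD
  have : (D.map ρ).Normal := Normal.map inferInstance ρ hρ
  have hcop' : (Nat.card (D.map ρ)).Coprime (D.map ρ).index := by
    rwa [← relIndex_ker, hker, D.index_map_eq hρ hkerD]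
  obtain ⟨C, hC⟩ := exists_right_complement'_of_coprime hcop'
  refine ⟨C.comap ρ, ?_, ?_⟩
  · rw [← hD, ← comap_inf, inf_comm, hC.disjoint.eq_bot, MonoidHom.comap_bot, hker]
  · rw [← hD, comap_sup_eq ρ _ _ hρ, sup_comm, hC.sup_eq_top, comap_top]

theorem exists_le_inf_eq_sup_eq_of_coprime [Finite G] {H D T : Subgroup G} (hHD : H ≤ D)
    (hDT : D ≤ T) (hH : T ≤ normalizer H) (hD : T ≤ normalizer D)
    (hcop : (H.relIndex D).Coprime (D.relIndex T)) :
    ∃ E ≤ T, E ⊓ D = H ∧ E ⊔ D = T := by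
  have : (H.subgroupOf T).Normal := (normal_subgroupOf_iff_le_normalizer (hHD.trans hDT)).mpr hH
  have : (D.subgroupOf T).Normal := (normal_subgroupOf_iff_le_normalizer hDT).mpr hD
  obtain ⟨E, hinf, hsup⟩ := exists_inf_eq_sup_eq_top_of_coprime (subgroupOf_mono T hHD)
    (by rwa [relIndex_subgroupOf hDT])
  refine ⟨E.map T.subtype, map_subtype_le E, ?_, ?_⟩
  · rw [← map_subgroupOf_eq_of_le hDT, ← map_inf_eq _ _ _ T.subtype_injective, hinf,
      map_subgroupOf_eq_of_le (hHD.trans hDT)]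
  · rw [← map_subgroupOf_eq_of_le hDT, ← map_sup, hsup, ← MonoidHom.range_eq_map, range_subtype]

end Subgroup

open Subgroup in
theorem IsHallSubgroup.of_subgroupOf_of_map {G : Type*} [Group G] [Finite G] {π : Set ℕ}
    {A E : Subgroup G} [A.Normal] (hEA : IsHallSubgroup π (E.subgroupOf A))
    (hEmap : IsHallSubgroup π (E.map (QuotientGroup.mk' A))) : IsHallSubgroup π E := by
  set φ := QuotientGroup.mk' A
  have hcard : Nat.card E = Nat.card (E.subgroupOf A) * Nat.card (E.map φ) := by
    have hrel : A.relIndex E = Nat.card (E.map φ) := by rw [← relIndex_ker, QuotientGroup.ker_mk']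
    rw [← (A.subgroupOf E).card_mul_index, card_subgroupOf, card_subgroupOf, inf_comm]
    exact congrArg _ hrel
  have hindex : E.index = (E.subgroupOf A).index * (E.map φ).index := by
    refine Nat.eq_of_mul_eq_mul_left (Nat.card_pos : 0 < Nat.card E) ?_
    calc Nat.card E * E.index = Nat.card A * Nat.card (G ⧸ A) := by
          rw [card_mul_index, ← index, card_mul_index]
      _ = Nat.card (E.subgroupOf A) * (E.subgroupOf A).index *
            (Nat.card (E.map φ) * (E.map φ).index) := by rw [card_mul_index, card_mul_index]
      _ = Nat.card E * ((E.subgroupOf A).index * (E.map φ).index) := by rw [hcard]; ring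
  rw [isHallSubgroup_iff] at *
  exact ⟨hcard ▸ hEA.1.mul hEmap.1, hindex ▸ hEA.2.mul hEmap.2⟩

open Subgroup in
theorem IsHallSubgroup.exists_of_le_normalizer {G : Type*} [Group G] [Finite G] {π : Set ℕ}
    {A H T : Subgroup G} [A.Normal] (hHA : H ≤ A) (hH : IsHallSubgroup π (H.subgroupOf A))
    (hHT : H ≤ T) (hT : T ≤ normalizer H)
    (hTA : IsHallSubgroup π (T.map (QuotientGroup.mk' A))) :
    ∃ E : Subgroup G, IsHallSubgroup π E := by
  rw [isHallSubgroup_iff] at hH hTA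
  set φ := QuotientGroup.mk' A
  have hker : φ.ker = A := QuotientGroup.ker_mk' A
  have hHAT : H ≤ A ⊓ T := le_inf hHA hHT
  have hcop : (H.relIndex (A ⊓ T)).Coprime ((A ⊓ T).relIndex T) := by
    have hdvd : H.relIndex (A ⊓ T) ∣ H.relIndex A :=
      Dvd.intro _ (relIndex_mul_relIndex H (A ⊓ T) A hHAT inf_le_left)
    have hAT : A.relIndex T = Nat.card (T.map φ) := by rw [← relIndex_ker, hker]
    rw [inf_relIndex_right, hAT]
    exact (hTA.1.coprime_compl (hH.2.of_dvd hdvd)).symm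
  obtain ⟨E, hET, hinf, hsup⟩ := exists_le_inf_eq_sup_eq_of_coprime hHAT inf_le_right hT
    (normal_subgroupOf_iff_le_normalizer_inf.mp normal_subgroupOf) hcop
  have hEA : E ⊓ A = H := by rw [← hinf, ← inf_assoc, inf_right_comm, inf_of_le_left hET]
  have hET' : E.map φ = T.map φ := by
    rw [← hsup, Subgroup.map_sup, (Subgroup.map_eq_bot_iff _).mpr (inf_le_left.trans hker.ge),
      sup_bot_eq]
  refine ⟨E, IsHallSubgroup.of_subgroupOf_of_map (A := A) ?_ ?_⟩
  · rwa [isHallSubgroup_iff, ← inf_subgroupOf_right, hEA]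
  · rwa [isHallSubgroup_iff, hET']

open Subgroup in
theorem Epi_of_normal_general {G : Type*} [Group G] [Finite G] (π : Set ℕ)
    (A : Subgroup G) [A.Normal]
    (hquot : ∃ K : Subgroup (G ⧸ A), IsHallSubgroup π K)
    (hinv : ∃ H : Subgroup G, H ≤ A ∧ IsHallSubgroup π (H.subgroupOf A) ∧
      {K : Subgroup G | ∃ a ∈ A, K = conjSub a⁻¹ H} =
        {K : Subgroup G | ∃ g : G, K = conjSub g⁻¹ H}) :
    ∃ H : Subgroup G, IsHallSubgroup π H := by
  obtain ⟨H, hHA, hH, hconj⟩ := hinv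
  obtain ⟨K, hK⟩ := hquot
  set φ := QuotientGroup.mk' A
  have hconjA : ∀ g : G, ∃ a ∈ A, conjSub g H = conjSub a H := fun g => by
    obtain ⟨a, ha, hga⟩ : conjSub g H ∈ {K : Subgroup G | ∃ a ∈ A, K = conjSub a⁻¹ H} :=
      hconj ▸ ⟨g⁻¹, by rw [inv_inv]⟩
    exact ⟨a⁻¹, A.inv_mem ha, hga⟩
  have hfrattini : (normalizer H).map φ = ⊤ := by
    rw [← map_top_of_surjective φ (QuotientGroup.mk'_surjective A),
      ← sup_normalizer_eq_top_of_forall_conjSub hconjA, Subgroup.map_sup,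
      (Subgroup.map_eq_bot_iff A).mpr (QuotientGroup.ker_mk' A).ge, bot_sup_eq]
  have hHK : H ≤ K.comap φ := hHA.trans ((QuotientGroup.ker_mk' A).ge.trans (φ.ker_le_comap K))
  refine IsHallSubgroup.exists_of_le_normalizer hHA hH (le_inf le_normalizer hHK) inf_le_left ?_
  rwa [map_inf_comap_of_map_eq_top hfrattini K]

/-- If `A ⊴ G`, `A` has a `π`-Hall subgroup, `G/A` has a `π`-Hall subgroup, and some
`π`-Hall subgroup `H` of `A` satisfies `H^A = H^G`, then `G` has a `π`-Hall subgroup. -/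
theorem Epi_of_normal {G : Type*} [Group G] [Finite G] (π : Set ℕ)
    (A : Subgroup G) [A.Normal]
    (hA : ∃ K : Subgroup A, IsHallSubgroup π K)
    (hquot : ∃ K : Subgroup (G ⧸ A), IsHallSubgroup π K)
    (hinv : ∃ H : Subgroup G, H ≤ A ∧ IsHallSubgroup π (H.subgroupOf A) ∧
      {K : Subgroup G | ∃ a ∈ A, K = conjSub a⁻¹ H} =
        {K : Subgroup G | ∃ g : G, K = conjSub g⁻¹ H}) :
    ∃ H : Subgroup G, IsHallSubgroup π H :=
  Epi_of_normal_general π A hquot hinv
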